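/- Let Ω ⊂ ℝⁿ be bounded with Lipschitz boundary, s ∈ (0,1), f ∈ L^{n/s}(Ω), and let u ∈ W^{s,1}_0(Ω) be a minimizer of F(v) = (1/2)[v]_{W^{s,1}(ℝⁿ)} − ∫_Ω fv. Then u ∈ L^∞(ℝⁿ), and moreover the extremal set {x ∈ ℝⁿ : |u(x)| = ‖u‖_{L^∞(ℝⁿ)}} has positive Lebesgue measure (when u ≠ 0, one has ‖f‖_{L^{n/s}({|u| = ‖u‖_∞})} ≥ 1/(2S_{n,s})). -/

import Mathlib

/-!
Write `T_k t = max (-k) (min t k)` and `G_k t = t - T_k t`. Both are monotone, so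
`|t - τ| = |T_k t - T_k τ| + |G_k t - G_k τ|` and the seminorm splits exactly,
`[u] = [T_k u] + [G_k u]`; testing minimality against `T_k u` gives `[G_k u] ≤ 2 ∫ f G_k u`.
A fractional Sobolev inequality `‖v‖_{L^{n/(n-s)}} ≤ [v] / C` (coarea formula plus an elementary
isoperimetric inequality, used in dual form through Hölder on each level set) bounds the
right-hand side by `2 ‖f‖_{L^{n/s}({|u| > k})} [G_k u] / C`, since `G_k u` lives on `{|u| > k}`.
Hence either `|u| ≤ k` a.e. or `‖f‖_{L^{n/s}({|u| > k})} ≥ C / 2`. By absolute continuity of the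
`L^{n/s}` norm of `f`, the second alternative keeps `|{|u| > k}|` away from zero; letting `k → ∞`
bounds `u`, and letting `k ↑ ‖u‖_∞` shows that `{|u| ≥ ‖u‖_∞}` has positive measure.
-/

open MeasureTheory Set
open scoped ENNReal

noncomputable section

/-- The Gagliardo `W^{s,1}(ℝⁿ)` seminorm of `u`, as a double integral in `ℝ≥0∞`. -/
def gag1 (n : ℕ) (s : ℝ) (u : EuclideanSpace ℝ (Fin n) → ℝ) : ℝ≥0∞ :=
  ∫⁻ x, ∫⁻ y, ENNReal.ofReal (|u x - u y| / dist x y ^ ((n : ℝ) + s))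

/-- Admissible class `W^{s,1}_0(Ω)`: measurable functions vanishing outside `Ω` with finite
Gagliardo `W^{s,1}(ℝⁿ)` seminorm (and with `f·u` integrable on `Ω`, so that the energy is
well defined). -/
def Adm (n : ℕ) (s : ℝ) (Ω : Set (EuclideanSpace ℝ (Fin n)))
    (f u : EuclideanSpace ℝ (Fin n) → ℝ) : Prop :=
  Measurable u ∧ (∀ x ∉ Ω, u x = 0) ∧ gag1 n s u ≠ ⊤ ∧
    IntegrableOn (fun x => f x * u x) Ω

/-- The energy `F(u) = (1/2)[u]_{W^{s,1}(ℝⁿ)} − ∫_Ω f u`. -/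
def F1 (n : ℕ) (s : ℝ) (Ω : Set (EuclideanSpace ℝ (Fin n)))
    (f u : EuclideanSpace ℝ (Fin n) → ℝ) : ℝ :=
  (1 / 2) * (gag1 n s u).toReal - ∫ x in Ω, f x * u x

/-- The fractional `s`-perimeter of a set `A ⊆ ℝⁿ`. -/
def perS (n : ℕ) (s : ℝ) (A : Set (EuclideanSpace ℝ (Fin n))) : ℝ≥0∞ :=
  (1 / 2) * gag1 n s (A.indicator fun _ => (1 : ℝ))

/-- The geometric functional `P(A) = Per_s(A) − ∫_A f`, valued in `EReal`. -/
def PE (n : ℕ) (s : ℝ) (f : EuclideanSpace ℝ (Fin n) → ℝ)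
    (A : Set (EuclideanSpace ℝ (Fin n))) : EReal :=
  (perS n s A : EReal) - ((∫ x in A, f x : ℝ) : EReal)

/-- The weighted fractional `(s,f)`-Cheegar constant of `Ω`. -/
def cheeg (n : ℕ) (s : ℝ) (Ω : Set (EuclideanSpace ℝ (Fin n)))
    (f : EuclideanSpace ℝ (Fin n) → ℝ) : ℝ≥0∞ :=
  sInf {r : ℝ≥0∞ | ∃ A : Set (EuclideanSpace ℝ (Fin n)), A ⊆ Ω ∧ MeasurableSet A ∧
    (0 < ∫ x in A, f x) ∧ r = perS n s A / ENNReal.ofReal (∫ x in A, f x)}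


def truncAt (k t : ℝ) : ℝ := max (-k) (min t k)

section Truncation

variable {k : ℝ}

lemma truncAt_mono : Monotone (truncAt k) :=
  fun _ _ h => max_le_max le_rfl (min_le_min h le_rfl)

lemma truncAt_sub_truncAt_le {a b : ℝ} (h : a ≤ b) : truncAt k b - truncAt k a ≤ b - a := by
  unfold truncAt; simp only [max_def, min_def]; split_ifs <;> linarith

lemma truncAt_zero (hk : 0 ≤ k) : truncAt k 0 = 0 := by
  simp [truncAt, hk]

lemma abs_truncAt_le (hk : 0 ≤ k) (t : ℝ) : |truncAt k t| ≤ |t| := by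
  unfold truncAt; rw [abs_le]; constructor <;> cases abs_cases t <;>
    simp only [le_max_iff, max_le_iff, le_min_iff, min_le_iff] <;> grind

lemma sub_truncAt_eq_zero_iff (hk : 0 ≤ k) {t : ℝ} : t - truncAt k t = 0 ↔ |t| ≤ k := by
  unfold truncAt; rw [abs_le]; simp only [max_def, min_def]; split_ifs <;> constructor <;> grind

lemma measurable_truncAt_comp {α : Type*} [MeasurableSpace α] {u : α → ℝ} (hu : Measurable u) :
    Measurable (fun x => truncAt k (u x)) :=
  measurable_const.max (hu.min measurable_const)

/-- Both `truncAt k` and `t ↦ t - truncAt k t` are monotone, so their increments add up. -/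
lemma abs_sub_eq_abs_truncAt_sub_add (a b : ℝ) :
    |a - b| = |truncAt k a - truncAt k b| + |(a - truncAt k a) - (b - truncAt k b)| := by
  rcases le_total a b with h | h
  · have := truncAt_mono (k := k) h
    have := truncAt_sub_truncAt_le (k := k) h
    rw [abs_of_nonpos (by linarith), abs_of_nonpos (by linarith), abs_of_nonpos (by linarith)]
    ring
  · have := truncAt_mono (k := k) h
    have := truncAt_sub_truncAt_le (k := k) h
    rw [abs_of_nonneg (by linarith), abs_of_nonneg (by linarith), abs_of_nonneg (by linarith)]
    ring

end Truncation

lemma setOf_lt_abs_subset {α : Type*} {Ω : Set α} {u : α → ℝ} (hu : ∀ x ∉ Ω, u x = 0) {k : ℝ}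
    (hk : 0 ≤ k) : {x | k < |u x|} ⊆ Ω := fun x hx => by
  by_contra hxΩ
  rw [mem_ofPred_eq, hu x hxΩ, abs_zero] at hx
  exact hx.not_ge hk

section Gagliardo

variable {n : ℕ} {s : ℝ} {u v : EuclideanSpace ℝ (Fin n) → ℝ}

lemma measurable_gag1_integrand (hu : Measurable u) :
    Measurable fun p : EuclideanSpace ℝ (Fin n) × EuclideanSpace ℝ (Fin n) =>
      ENNReal.ofReal (|u p.1 - u p.2| / dist p.1 p.2 ^ ((n : ℝ) + s)) := by
  fun_prop

lemma gag1_mono (h : ∀ x y, |u x - u y| ≤ |v x - v y|) : gag1 n s u ≤ gag1 n s v :=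
  lintegral_mono fun x => lintegral_mono fun y =>
    ENNReal.ofReal_le_ofReal (div_le_div_of_nonneg_right (h x y) (by positivity))

lemma gag1_eq_lintegral_prod (hu : Measurable u) :
    gag1 n s u = ∫⁻ p, ENNReal.ofReal (|u p.1 - u p.2| / dist p.1 p.2 ^ ((n : ℝ) + s))
      ∂(volume.prod volume) :=
  (lintegral_prod _ (measurable_gag1_integrand hu).aemeasurable).symm

lemma gag1_eq_gag1_truncAt_add (hu : Measurable u) (k : ℝ) :
    gag1 n s u = gag1 n s (fun x => truncAt k (u x))
      + gag1 n s (fun x => u x - truncAt k (u x)) := by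
  have hT := measurable_truncAt_comp (k := k) hu
  rw [gag1_eq_lintegral_prod hu, gag1_eq_lintegral_prod hT,
    gag1_eq_lintegral_prod (u := fun x => u x - truncAt k (u x)) (hu.sub hT),
    ← lintegral_add_left (measurable_gag1_integrand hT)]
  refine lintegral_congr fun p => ?_
  rw [abs_sub_eq_abs_truncAt_sub_add (k := k), add_div,
    ENNReal.ofReal_add (by positivity) (by positivity)]

/-- A function with vanishing seminorm is a.e. constant. -/
lemma ae_eq_zero_of_gag1_eq_zero (hv : Measurable v) (h : gag1 n s v = 0)
    (hzero : volume {x | v x = 0} ≠ 0) : ∀ᵐ x, v x = 0 := by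
  rw [gag1_eq_lintegral_prod hv, lintegral_eq_zero_iff (measurable_gag1_integrand hv)] at h
  filter_upwards [Measure.ae_ae_of_ae_prod h] with x hx
  have hconst : ∀ᵐ y, v y = v x := by
    filter_upwards [hx] with y hy
    rcases eq_or_ne x y with rfl | hxy
    · rfl
    have hpos : 0 < dist x y ^ ((n : ℝ) + s) := Real.rpow_pos_of_pos (dist_pos.2 hxy) _
    have hy' := ENNReal.ofReal_eq_zero.1 hy
    rw [div_le_iff₀ hpos, zero_mul, abs_nonpos_iff, sub_eq_zero] at hy'
    exact hy'.symm
  by_contra hvx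
  exact hzero (measure_mono_null (fun y (hy : v y = 0) (hyx : v y = v x) => hvx (hyx ▸ hy))
    (ae_iff.1 hconst))

end Gagliardo

section Coarea

variable {n : ℕ} {s : ℝ}

lemma lintegral_abs_indicator_Iio_sub (a b : ℝ) :
    ∫⁻ t, ENNReal.ofReal |(Iio a).indicator (fun _ => (1 : ℝ)) t
      - (Iio b).indicator (fun _ => (1 : ℝ)) t| = ENNReal.ofReal |a - b| := by
  wlog hab : a ≤ b generalizing a b
  · simpa only [abs_sub_comm] using this b a (le_of_not_ge hab)
  have hind : ∀ t, ENNReal.ofReal |(Iio a).indicator (fun _ => (1 : ℝ)) t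
      - (Iio b).indicator (fun _ => (1 : ℝ)) t| = (Ico a b).indicator (fun _ => 1) t := by
    intro t
    simp only [indicator_apply, mem_Iio, mem_Ico]
    split_ifs <;> simp_all <;> linarith
  rw [lintegral_congr hind, lintegral_indicator_const measurableSet_Ico, Real.volume_Ico, one_mul,
    abs_sub_comm, abs_of_nonneg (sub_nonneg.2 hab)]

/-- The coarea formula for the Gagliardo seminorm. -/
lemma lintegral_gag1_indicator_lt {w : EuclideanSpace ℝ (Fin n) → ℝ} (hw : Measurable w) :
    ∫⁻ t, gag1 n s ({x | t < w x}.indicator fun _ => (1 : ℝ)) = gag1 n s w := by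
  have hind : ∀ t, Measurable ({x | t < w x}.indicator fun _ => (1 : ℝ)) := fun t =>
    measurable_const.indicator (measurableSet_lt measurable_const hw)
  simp_rw [gag1_eq_lintegral_prod (hind _), gag1_eq_lintegral_prod hw]
  rw [lintegral_lintegral_swap]
  · refine lintegral_congr fun p => ?_
    simp_rw [div_eq_mul_inv, ENNReal.ofReal_mul (abs_nonneg _)]
    rw [lintegral_mul_const' _ _ ENNReal.ofReal_ne_top]
    exact congrArg (· * _) (lintegral_abs_indicator_Iio_sub (w p.1) (w p.2))
  · have hlev : ∀ i : EuclideanSpace ℝ (Fin n) × EuclideanSpace ℝ (Fin n) →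
        EuclideanSpace ℝ (Fin n), Measurable i →
        Measurable fun q : ℝ × _ => {x | q.1 < w x}.indicator (fun _ => (1 : ℝ)) (i q.2) :=
      fun i hi => measurable_const.indicator
        (measurableSet_lt measurable_fst (hw.comp (hi.comp measurable_snd)))
    exact (ENNReal.measurable_ofReal.comp
      (((hlev _ measurable_fst).sub (hlev _ measurable_snd)).abs.div
        ((measurable_dist.comp measurable_snd).pow_const _))).aemeasurable

end Coarea

lemma lintegral_mul_ofReal_eq_lintegral_superlevel {α : Type*} [MeasurableSpace α]
    {μ : Measure α} {g : α → ℝ≥0∞} (hg : AEMeasurable g μ) {w : α → ℝ} (hw : Measurable w)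
    (hw0 : 0 ≤ w) :
    ∫⁻ x, g x * ENNReal.ofReal (w x) ∂μ = ∫⁻ t in Ioi 0, ∫⁻ x in {x | t < w x}, g x ∂μ := by
  calc ∫⁻ x, g x * ENNReal.ofReal (w x) ∂μ = ∫⁻ x, ENNReal.ofReal (w x) ∂μ.withDensity g :=
        (lintegral_withDensity_eq_lintegral_mul₀ hg hw.ennreal_ofReal.aemeasurable).symm
    _ = _ := lintegral_eq_lintegral_meas_lt _ (ae_of_all _ hw0) hw.aemeasurable
    _ = _ := lintegral_congr fun t => withDensity_apply _ (measurableSet_lt measurable_const hw)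

section Isoperimetric

variable {n : ℕ} {s : ℝ}

def isoC (n : ℕ) (s : ℝ) : ℝ :=
  ((volume (Metric.ball (0 : EuclideanSpace ℝ (Fin n)) 1)).toReal / 2) ^ (((n : ℝ) + s) / n)

lemma isoC_pos : 0 < isoC n s :=
  Real.rpow_pos_of_pos (div_pos (ENNReal.toReal_pos (Metric.measure_ball_pos _ _ one_pos).ne'
    measure_ball_lt_top.ne) two_pos) _

lemma setLIntegral_setLIntegral_compl_le_gag1_indicator {E : Set (EuclideanSpace ℝ (Fin n))}
    (hE : MeasurableSet E) :
    ∫⁻ x in E, ∫⁻ y in Eᶜ, ENNReal.ofReal (dist x y ^ ((n : ℝ) + s))⁻¹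
      ≤ gag1 n s (E.indicator fun _ => (1 : ℝ)) := by
  refine (setLIntegral_mono' hE fun x hx => ?_).trans (setLIntegral_le_lintegral _ _)
  refine (setLIntegral_le_lintegral _ _).trans_eq' (setLIntegral_congr_fun hE.compl fun y hy => ?_)
  simp [indicator_of_mem hx, indicator_of_notMem hy]

lemma mul_measure_ball_sub_le_setLIntegral_compl {α : Type*} [MetricSpace α]
    [MeasurableSpace α] [OpensMeasurableSpace α] {μ : Measure α} {E : Set α}
    (hE : MeasurableSet E) {x : α} (hx : x ∈ E) {R c : ℝ} (hc : 0 ≤ c) :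
    ENNReal.ofReal (R ^ c)⁻¹ * (μ (Metric.ball x R) - μ E)
      ≤ ∫⁻ y in Eᶜ, ENNReal.ofReal (dist x y ^ c)⁻¹ ∂μ := by
  calc ENNReal.ofReal (R ^ c)⁻¹ * (μ (Metric.ball x R) - μ E)
      ≤ ENNReal.ofReal (R ^ c)⁻¹ * μ (Metric.ball x R \ E) := by gcongr; exact le_measure_sdiff
    _ = ∫⁻ _ in Metric.ball x R \ E, ENNReal.ofReal (R ^ c)⁻¹ ∂μ := (setLIntegral_const _ _).symm
    _ ≤ ∫⁻ y in Metric.ball x R \ E, ENNReal.ofReal (dist x y ^ c)⁻¹ ∂μ := by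
        refine setLIntegral_mono' (Metric.isOpen_ball.measurableSet.diff hE) fun y hy => ?_
        have hxy : 0 < dist x y := dist_pos.2 fun h : x = y => hy.2 (h ▸ hx)
        refine ENNReal.ofReal_le_ofReal (inv_anti₀ (Real.rpow_pos_of_pos hxy c) ?_)
        exact Real.rpow_le_rpow dist_nonneg (dist_comm x y ▸ (Metric.mem_ball.1 hy.1).le) hc
    _ ≤ ∫⁻ y in Eᶜ, ENNReal.ofReal (dist x y ^ c)⁻¹ ∂μ :=
        lintegral_mono_set fun y hy => hy.2

lemma isoC_mul_rpow_eq {A ω : ℝ} (hn : n ≠ 0) (hA : 0 < A) (hω : 0 < ω) :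
    (ω / 2) ^ (((n : ℝ) + s) / n) * A ^ (((n : ℝ) - s) / n)
      = (((2 * A / ω) ^ (n : ℝ)⁻¹) ^ ((n : ℝ) + s))⁻¹ * (2 * A - A) * A := by
  have hn' : (n : ℝ) ≠ 0 := Nat.cast_ne_zero.2 hn
  have hexp : ((n : ℝ) - s) / n = 2 - ((n : ℝ) + s) / n := by field_simp; ring
  rw [← Real.rpow_mul (by positivity), inv_mul_eq_div, show 2 * A / ω = A / (ω / 2) by ring,
    Real.div_rpow hA.le (by positivity), hexp, Real.rpow_sub hA, Real.rpow_two]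
  field_simp
  ring

/-- Every `x ∈ E` sees `ball x R \ E ⊆ Eᶜ`, of measure at least `|E|` once `|ball x R| = 2|E|`,
at distance less than `R`; this is where the constant `isoC` comes from. -/
theorem ofReal_isoC_mul_le_gag1_indicator [NeZero n] (hs0 : 0 < s) (hsn : s < n)
    {E : Set (EuclideanSpace ℝ (Fin n))} (hE : MeasurableSet E) (hfin : volume E ≠ ⊤) :
    ENNReal.ofReal (isoC n s) * volume E ^ (((n : ℝ) - s) / n)
      ≤ gag1 n s (E.indicator fun _ => (1 : ℝ)) := by
  rcases eq_or_ne (volume E) 0 with h0 | h0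
  · rw [h0, ENNReal.zero_rpow_of_pos (div_pos (by linarith) (Nat.cast_pos.2 (NeZero.pos n))),
      mul_zero]
    simp
  set A := (volume E).toReal
  set ω := (volume (Metric.ball (0 : EuclideanSpace ℝ (Fin n)) 1)).toReal
  have hA : 0 < A := ENNReal.toReal_pos h0 hfin
  have hω : 0 < ω := ENNReal.toReal_pos (Metric.measure_ball_pos _ _ one_pos).ne'
    measure_ball_lt_top.ne
  set R := (2 * A / ω) ^ (n : ℝ)⁻¹
  have hR : 0 < R := by positivity
  have hball : ∀ x : EuclideanSpace ℝ (Fin n),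
      volume (Metric.ball x R) = ENNReal.ofReal (2 * A) := fun x => by
    rw [Measure.addHaar_ball_of_pos volume _ hR, finrank_euclideanSpace_fin,
      Real.rpow_inv_natCast_pow (by positivity) (NeZero.ne n), ← ENNReal.ofReal_toReal
      measure_ball_lt_top.ne, ← ENNReal.ofReal_mul (by positivity), div_mul_cancel₀ _ hω.ne']
  have hE' : volume E = ENNReal.ofReal A := (ENNReal.ofReal_toReal hfin).symm
  calc ENNReal.ofReal (isoC n s) * volume E ^ (((n : ℝ) - s) / n)
      = ENNReal.ofReal (R ^ ((n : ℝ) + s))⁻¹ * (ENNReal.ofReal (2 * A) - volume E) * volume E := by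
        rw [hE', ← ENNReal.ofReal_sub _ hA.le, ENNReal.ofReal_rpow_of_pos hA,
          ← ENNReal.ofReal_mul isoC_pos.le, ← ENNReal.ofReal_mul (by positivity),
          ← ENNReal.ofReal_mul (mul_nonneg (by positivity) (by linarith))]
        exact congrArg _ (isoC_mul_rpow_eq (NeZero.ne n) hA hω)
    _ = ∫⁻ x in E, ENNReal.ofReal (R ^ ((n : ℝ) + s))⁻¹
          * (volume (Metric.ball x R) - volume E) := by simp_rw [hball, setLIntegral_const]
    _ ≤ ∫⁻ x in E, ∫⁻ y in Eᶜ, ENNReal.ofReal (dist x y ^ ((n : ℝ) + s))⁻¹ :=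
        setLIntegral_mono' hE fun x hx =>
          mul_measure_ball_sub_le_setLIntegral_compl hE hx (by positivity)
    _ ≤ gag1 n s (E.indicator fun _ => (1 : ℝ)) :=
        setLIntegral_setLIntegral_compl_le_gag1_indicator hE

end Isoperimetric

section Sobolev

variable {n : ℕ} {s : ℝ} [NeZero n]

lemma setLIntegral_enorm_le_eLpNorm_mul_gag1_indicator (hs0 : 0 < s) (hsn : s < n)
    {A E : Set (EuclideanSpace ℝ (Fin n))} (hEA : E ⊆ A) (hE : MeasurableSet E)
    (hfin : volume E ≠ ⊤) {f : EuclideanSpace ℝ (Fin n) → ℝ}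
    (hf : AEStronglyMeasurable f (volume.restrict A)) :
    ∫⁻ x in E, ‖f x‖ₑ ≤ eLpNorm f (ENNReal.ofReal (n / s)) (volume.restrict A)
      * ((ENNReal.ofReal (isoC n s))⁻¹ * gag1 n s (E.indicator fun _ => (1 : ℝ))) := by
  set p := ENNReal.ofReal (n / s)
  have hp : 1 ≤ p := ENNReal.one_le_ofReal.2 ((one_le_div hs0).2 hsn.le)
  have hexp : 1 / (1 : ℝ≥0∞).toReal - 1 / p.toReal = ((n : ℝ) - s) / n := by
    have hn : (n : ℝ) ≠ 0 := Nat.cast_ne_zero.2 (NeZero.ne n)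
    rw [ENNReal.toReal_ofReal (by positivity), ENNReal.toReal_one]
    field_simp
  have hHolder := eLpNorm_le_eLpNorm_mul_rpow_measure_univ hp
    (hf.mono_measure (Measure.restrict_mono hEA le_rfl))
  rw [Measure.restrict_apply_univ, hexp, eLpNorm_one_eq_lintegral_enorm] at hHolder
  refine hHolder.trans ?_
  gcongr
  exact (ENNReal.mul_le_iff_le_inv (by simpa using isoC_pos) ENNReal.ofReal_ne_top).1
    (ofReal_isoC_mul_le_gag1_indicator hs0 hsn hE hfin)

/-- Fractional Sobolev inequality in dual form, obtained level by level from Hölder, the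
isoperimetric inequality and the coarea formula. -/
theorem lintegral_enorm_mul_le_eLpNorm_mul_gag1 (hs0 : 0 < s) (hsn : s < n)
    {A : Set (EuclideanSpace ℝ (Fin n))} (hA : volume A ≠ ⊤) {f : EuclideanSpace ℝ (Fin n) → ℝ}
    (hf : MemLp f (ENNReal.ofReal (n / s)) (volume.restrict A))
    {v : EuclideanSpace ℝ (Fin n) → ℝ} (hv : Measurable v) (hvA : ∀ x ∉ A, v x = 0) :
    ∫⁻ x, ‖f x‖ₑ * ‖v x‖ₑ ≤ eLpNorm f (ENNReal.ofReal (n / s)) (volume.restrict A)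
      * (ENNReal.ofReal (isoC n s))⁻¹ * gag1 n s v := by
  set N := eLpNorm f (ENNReal.ofReal (n / s)) (volume.restrict A)
  have hlevel : ∀ t ∈ Ioi (0 : ℝ), {x | t < |v x|} ⊆ A := fun t ht =>
    setOf_lt_abs_subset hvA (le_of_lt ht)
  have hmeas : ∀ t : ℝ, MeasurableSet {x | t < |v x|} := fun t =>
    measurableSet_lt measurable_const hv.abs
  calc ∫⁻ x, ‖f x‖ₑ * ‖v x‖ₑ
      = ∫⁻ x in A, ‖f x‖ₑ * ENNReal.ofReal |v x| := by
        simp_rw [Real.enorm_eq_ofReal_abs (v _)]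
        refine (setLIntegral_eq_of_support_subset fun x hx => ?_).symm
        by_contra hxA
        exact hx (by simp [hvA x hxA])
    _ = ∫⁻ t in Ioi 0, ∫⁻ x in {x | t < |v x|}, ‖f x‖ₑ := by
        rw [lintegral_mul_ofReal_eq_lintegral_superlevel hf.1.enorm hv.abs fun x => abs_nonneg _]
        refine setLIntegral_congr_fun measurableSet_Ioi fun t ht => ?_
        rw [Measure.restrict_restrict (hmeas t), inter_eq_left.2 (hlevel t ht)]
    _ ≤ ∫⁻ t in Ioi 0, N * (ENNReal.ofReal (isoC n s))⁻¹
          * gag1 n s ({x | t < |v x|}.indicator fun _ => (1 : ℝ)) := by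
        refine setLIntegral_mono' measurableSet_Ioi fun t ht => ?_
        rw [mul_assoc]
        exact setLIntegral_enorm_le_eLpNorm_mul_gag1_indicator hs0 hsn (hlevel t ht) (hmeas t)
          (measure_ne_top_of_subset (hlevel t ht) hA) hf.1
    _ ≤ N * (ENNReal.ofReal (isoC n s))⁻¹
          * ∫⁻ t, gag1 n s ({x | t < |v x|}.indicator fun _ => (1 : ℝ)) := by
        rw [← lintegral_const_mul' _ _ (ENNReal.mul_ne_top hf.2.ne (by simpa using isoC_pos))]
        exact setLIntegral_le_lintegral _ _
    _ ≤ N * (ENNReal.ofReal (isoC n s))⁻¹ * gag1 n s v := by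
        rw [lintegral_gag1_indicator_lt hv.abs]
        gcongr
        exact gag1_mono fun x y => abs_abs_sub_abs_le_abs_sub _ _

end Sobolev

section Minimizers

variable {n : ℕ} {s : ℝ} {Ω : Set (EuclideanSpace ℝ (Fin n))} {f u : EuclideanSpace ℝ (Fin n) → ℝ}

/-- Testing minimality against the truncation `truncAt k ∘ u`. -/
lemma gag1_sub_truncAt_le (hf : AEStronglyMeasurable f (volume.restrict Ω)) (hu : Adm n s Ω f u)
    (hmin : ∀ v, Adm n s Ω f v → F1 n s Ω f u ≤ F1 n s Ω f v) {k : ℝ} (hk : 0 ≤ k) :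
    gag1 n s (fun x => u x - truncAt k (u x))
      ≤ 2 * ENNReal.ofReal (∫ x in Ω, f x * (u x - truncAt k (u x))) := by
  obtain ⟨hum, hu0, hufin, hfu⟩ := hu
  have hsplit := gag1_eq_gag1_truncAt_add (s := s) hum k
  rw [hsplit, ENNReal.add_ne_top] at hufin
  have hfT : IntegrableOn (fun x => f x * truncAt k (u x)) Ω :=
    Integrable.mono hfu (hf.mul (measurable_truncAt_comp hum).aestronglyMeasurable) <|
      ae_of_all _ fun x => by
        simpa only [norm_mul, Real.norm_eq_abs] using
          mul_le_mul_of_nonneg_left (abs_truncAt_le hk (u x)) (abs_nonneg (f x))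
  have hF := hmin _ ⟨measurable_truncAt_comp hum, fun x hx => by simp [hu0 x hx, truncAt_zero hk],
    hufin.1, hfT⟩
  have hint : ∫ x in Ω, f x * (u x - truncAt k (u x))
      = (∫ x in Ω, f x * u x) - ∫ x in Ω, f x * truncAt k (u x) := by
    simp_rw [mul_sub]; exact integral_sub hfu hfT
  rw [F1, F1, hsplit, ENNReal.toReal_add hufin.1 hufin.2] at hF
  calc gag1 n s (fun x => u x - truncAt k (u x))
      = ENNReal.ofReal (gag1 n s (fun x => u x - truncAt k (u x))).toReal :=
        (ENNReal.ofReal_toReal hufin.2).symm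
    _ ≤ ENNReal.ofReal (2 * ∫ x in Ω, f x * (u x - truncAt k (u x))) :=
        ENNReal.ofReal_le_ofReal (by linarith)
    _ = _ := by rw [ENNReal.ofReal_mul zero_le_two, ENNReal.ofReal_ofNat]

theorem isoC_div_two_le_eLpNorm_superlevel [NeZero n] (hs0 : 0 < s) (hsn : s < n)
    (hΩ : volume Ω ≠ ⊤) (hΩc : volume Ωᶜ ≠ 0)
    (hf : MemLp f (ENNReal.ofReal (n / s)) (volume.restrict Ω)) (hu : Adm n s Ω f u)
    (hmin : ∀ v, Adm n s Ω f v → F1 n s Ω f u ≤ F1 n s Ω f v) {k : ℝ} (hk : 0 < k)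
    (hbig : ¬ ∀ᵐ x, |u x| ≤ k) :
    ENNReal.ofReal (isoC n s / 2)
      ≤ eLpNorm f (ENNReal.ofReal (n / s)) (volume.restrict {x | k < |u x|}) := by
  set v := fun x => u x - truncAt k (u x)
  set N := eLpNorm f (ENNReal.ofReal (n / s)) (volume.restrict {x | k < |u x|})
  set C := ENNReal.ofReal (isoC n s)
  have hv : Measurable v := hu.1.sub (measurable_truncAt_comp hu.1)
  have hvk : ∀ x ∉ {x | k < |u x|}, v x = 0 := fun x hx =>
    (sub_truncAt_eq_zero_iff hk.le).2 (not_lt.1 hx)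
  have hkΩ : {x | k < |u x|} ⊆ Ω := setOf_lt_abs_subset hu.2.1 hk.le
  have hv0 : gag1 n s v ≠ 0 := fun h => hbig <| by
    have hΩv : volume {x | v x = 0} ≠ 0 := fun h0 => hΩc (measure_mono_null (fun x hx => by
      simp [v, hu.2.1 x hx, truncAt_zero hk.le]) h0)
    filter_upwards [ae_eq_zero_of_gag1_eq_zero hv h hΩv] with x hx
    exact (sub_truncAt_eq_zero_iff hk.le).1 hx
  have hvfin : gag1 n s v ≠ ⊤ := by
    have := hu.2.2.1
    rw [gag1_eq_gag1_truncAt_add hu.1 k, ENNReal.add_ne_top] at this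
    exact this.2
  have hC : C ≠ 0 := by simpa [C] using isoC_pos
  have hchain : 1 * gag1 n s v ≤ 2 * N * C⁻¹ * gag1 n s v :=
    calc 1 * gag1 n s v
        ≤ 2 * ENNReal.ofReal (∫ x in Ω, f x * v x) := by
          rw [one_mul]; exact gag1_sub_truncAt_le hf.1 hu hmin hk.le
      _ ≤ 2 * ∫⁻ x, ‖f x‖ₑ * ‖v x‖ₑ := by
          gcongr
          calc ENNReal.ofReal (∫ x in Ω, f x * v x)
              ≤ ∫⁻ x in Ω, ‖f x * v x‖ₑ :=
                (Real.ofReal_le_enorm _).trans (enorm_integral_le_lintegral_enorm _)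
            _ ≤ ∫⁻ x, ‖f x‖ₑ * ‖v x‖ₑ := by
                simp_rw [enorm_mul]; exact setLIntegral_le_lintegral _ _
      _ ≤ 2 * (N * C⁻¹ * gag1 n s v) := by
          gcongr
          exact lintegral_enorm_mul_le_eLpNorm_mul_gag1 hs0 hsn (measure_ne_top_of_subset hkΩ hΩ)
            (hf.mono_measure (Measure.restrict_mono hkΩ le_rfl)) hv hvk
      _ = 2 * N * C⁻¹ * gag1 n s v := by ring
  have h1 := (ENNReal.mul_le_mul_iff_left hv0 hvfin).1 hchain
  rw [← div_eq_mul_inv, ENNReal.le_div_iff_mul_le (Or.inl hC) (Or.inl ENNReal.ofReal_ne_top),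
    one_mul, mul_comm] at h1
  rw [ENNReal.ofReal_div_of_pos two_pos, ENNReal.ofReal_ofNat]
  exact ENNReal.div_le_of_le_mul h1

end Minimizers

section Flatness

variable {α : Type*} [MeasurableSpace α] {μ : Measure α} [NeZero μ] {u : α → ℝ}

lemma memLp_top_and_measure_pos_of_subsingleton [Subsingleton α] (u : α → ℝ) :
    MemLp u ⊤ μ ∧ 0 < μ {x | |u x| = (eLpNorm u ⊤ μ).toReal} := by
  obtain ⟨x₀⟩ := Measure.nonempty_of_neZero μ
  have hu : u = fun _ => u x₀ := funext fun x => congrArg u (Subsingleton.elim x x₀)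
  rw [hu, eLpNorm_exponent_top, eLpNormEssSup_const _ (NeZero.ne μ)]
  refine ⟨memLp_top_const _, ?_⟩
  simpa using NeZero.ne μ

theorem memLp_top_and_measure_pos_of_superlevel (hu : Measurable u)
    (hfin : μ {x | u x ≠ 0} ≠ ⊤) {η : ℝ≥0∞} (hη : 0 < η)
    (h : ∀ k, 0 < k → μ {x | k < |u x|} ≤ η → ∀ᵐ x ∂μ, |u x| ≤ k) :
    MemLp u ⊤ μ ∧ 0 < μ {x | |u x| = (eLpNorm u ⊤ μ).toReal} := by
  have hlev : ∀ k : ℝ, MeasurableSet {x | k < |u x|} := fun k =>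
    measurableSet_lt measurable_const hu.abs
  have hbdd : MemLp u ⊤ μ := by
    have hlim : Filter.Tendsto (fun k : ℝ => μ {x | k < |u x|}) Filter.atTop (nhds 0) := by
      have := tendsto_measure_iInter_atTop (μ := μ) (fun k => (hlev k).nullMeasurableSet)
        (fun k l hkl x (hx : l < |u x|) => hkl.trans_lt hx) ⟨0, by simpa using hfin⟩
      have hempty : ⋂ k : ℝ, {x | k < |u x|} = ∅ :=
        eq_empty_of_forall_notMem fun x hx => lt_irrefl |u x| (mem_iInter.1 hx |u x|)
      rwa [hempty, measure_empty] at this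
    obtain ⟨k, hk, hkη⟩ :=
      ((Filter.eventually_gt_atTop 0).and (hlim.eventually (ge_mem_nhds hη))).exists
    exact memLp_top_of_bound hu.aestronglyMeasurable k (by simpa using h k hk hkη)
  refine ⟨hbdd, ?_⟩
  set M := (eLpNorm u ⊤ μ).toReal
  have hM : ∀ᵐ x ∂μ, |u x| ≤ M := by
    filter_upwards [ae_le_eLpNormEssSup (f := u) (μ := μ)] with x hx
    rw [← eLpNorm_exponent_top] at hx
    simpa [M] using ENNReal.toReal_mono hbdd.2.ne hx
  have hpos : μ {x | M ≤ |u x|} ≠ 0 := by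
    intro h0
    rcases (show 0 ≤ M from ENNReal.toReal_nonneg).eq_or_lt with hM0 | hM0
    · rw [← hM0] at h0
      exact NeZero.ne μ (by simpa using h0)
    have hlim := tendsto_measure_biInter_gt (μ := μ) (s := fun r : ℝ => {x | M - r < |u x|})
      (a := 0) (fun r _ => (hlev _).nullMeasurableSet)
      (fun i j _ hij x (hx : M - i < |u x|) => show M - j < |u x| by linarith)
      ⟨M, hM0, by simpa [abs_pos] using hfin⟩
    have hinter : ⋂ r > (0 : ℝ), {x | M - r < |u x|} = {x | M ≤ |u x|} := by
      ext x
      simp only [mem_iInter, mem_ofPred_eq]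
      exact ⟨fun hx => le_of_forall_pos_lt_add fun r hr => by linarith [hx r hr],
        fun hx r hr => by linarith⟩
    rw [hinter, h0] at hlim
    obtain ⟨r, ⟨hr0, hrM⟩, hrη⟩ :=
      (Filter.Eventually.and (Ioo_mem_nhdsGT hM0) (hlim.eventually (ge_mem_nhds hη))).exists
    have hle : eLpNorm u ⊤ μ ≤ ENNReal.ofReal (M - r) := by
      rw [eLpNorm_exponent_top]
      exact eLpNormEssSup_le_of_ae_bound (by simpa using h (M - r) (by linarith) hrη)
    linarith [ENNReal.toReal_le_of_le_ofReal (by linarith) hle]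
  calc 0 < μ {x | M ≤ |u x|} := pos_iff_ne_zero.2 hpos
    _ = μ ({x | M ≤ |u x|} \ {x | M < |u x|}) := by
        refine (measure_sdiff_null ?_).symm
        simpa [ae_iff] using hM
    _ ≤ μ {x | |u x| = M} := measure_mono fun x hx => le_antisymm (not_lt.1 hx.2) hx.1

end Flatness

/-- "Flatness" of minimizers: if `u ∈ W^{s,1}_0(Ω)` minimizes
`F(v) = (1/2)[v]_{W^{s,1}(ℝⁿ)} − ∫_Ω f v` with `f ∈ L^{n/s}(Ω)`, then `u ∈ L^∞(ℝⁿ)` and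
the extremal set `{x : |u(x)| = ‖u‖_{L^∞(ℝⁿ)}}` has positive Lebesgue measure. -/
theorem stmt17 (n : ℕ) (s : ℝ) (Ω : Set (EuclideanSpace ℝ (Fin n)))
    (f u : EuclideanSpace ℝ (Fin n) → ℝ)
    (hΩo : IsOpen Ω) (hΩb : Bornology.IsBounded Ω)
    (hs0 : 0 < s) (hs1 : s < 1)
    (hf : MemLp f (ENNReal.ofReal ((n : ℝ) / s)) (volume.restrict Ω))
    (hu : Adm n s Ω f u)
    (hmin : ∀ v, Adm n s Ω f v → F1 n s Ω f u ≤ F1 n s Ω f v) :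
    MemLp u ⊤ volume ∧
    0 < volume {x : EuclideanSpace ℝ (Fin n) | |u x| = (eLpNorm u ⊤ volume).toReal} := by
  rcases Nat.eq_zero_or_pos n with rfl | hn
  · exact memLp_top_and_measure_pos_of_subsingleton u
  have : NeZero n := ⟨hn.ne'⟩
  have hsn : s < n := hs1.trans_le (Nat.one_le_cast.2 hn)
  have hΩ : volume Ω ≠ ⊤ := hΩb.measure_lt_top.ne
  have hΩc : volume Ωᶜ ≠ 0 := by
    rw [measure_compl hΩo.measurableSet hΩ, measure_univ_of_isAddLeftInvariant,
      ENNReal.top_sub hΩ]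
    exact ENNReal.top_ne_zero
  obtain ⟨δ, hδ, hsmall⟩ := hf.eLpNorm_indicator_le
    (ENNReal.one_le_ofReal.2 ((one_le_div hs0).2 hsn.le)) ENNReal.ofReal_ne_top
    (div_pos isoC_pos four_pos : 0 < isoC n s / 4)
  refine memLp_top_and_measure_pos_of_superlevel hu.1
    (measure_ne_top_of_subset (fun x hx => by_contra fun hxΩ => hx (hu.2.1 x hxΩ)) hΩ)
    (ENNReal.ofReal_pos.2 hδ) fun k hk hkδ => ?_
  by_contra hbig
  have hkΩ : {x | k < |u x|} ⊆ Ω := setOf_lt_abs_subset hu.2.1 hk.le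
  have hlarge := isoC_div_two_le_eLpNorm_superlevel hs0 hsn hΩ hΩc hf hu hmin hk hbig
  have hsmallk := hsmall _ (measurableSet_lt measurable_const hu.1.abs)
    ((Measure.restrict_apply_le _ _).trans hkδ)
  rw [eLpNorm_indicator_eq_eLpNorm_restrict (measurableSet_lt measurable_const hu.1.abs),
    Measure.restrict_restrict_of_subset hkΩ] at hsmallk
  have hC := isoC_pos (n := n) (s := s)
  have := (ENNReal.ofReal_le_ofReal_iff (by positivity)).1 (hlarge.trans hsmallk)
  linarith

end
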